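/- Let W₁, W₀ ∈ ℂ^{d×d} be such that the d×2d matrix [W₁ W₀] has rank d. For s ∈ ℂ let Ψ^s be the fundamental solution. Then there exists a classical solution x of the port-Hamiltonian eigenvalue ODE with x not identically zero and W₁·(𝓗x)(1) + W₀·(𝓗x)(0) = 0 if and only if det(W₁·𝓗(1)·Ψ^s(1) + W₀·𝓗(0)) = 0. (Lemma 5.4.) -/

import Mathlib

open Matrix Set
open scoped ComplexOrder

/-- `x : ℝ → ℂ^d` is a classical solution of the port-Hamiltonian eigenvalue ODE
`s·x(ζ) = P₁·(𝓗x)'(ζ) + P₀·(𝓗x)(ζ)` on `[0,1]`: the map `u := 𝓗·x` is continuously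
differentiable on `[0,1]` and the equation holds there. -/
def IsClassicalSolution {d : ℕ} (P₁ P₀ : Matrix (Fin d) (Fin d) ℂ)
    (𝓗 : ℝ → Matrix (Fin d) (Fin d) ℂ) (s : ℂ)
    (x : ℝ → EuclideanSpace ℂ (Fin d)) : Prop :=
  ∃ u' : ℝ → EuclideanSpace ℂ (Fin d),
    ContinuousOn u' (Set.Icc 0 1) ∧
    (∀ ζ ∈ Set.Icc (0:ℝ) 1,
      HasDerivWithinAt (fun t => Matrix.toEuclideanLin (𝓗 t) (x t)) (u' ζ) (Set.Icc 0 1) ζ) ∧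
    (∀ ζ ∈ Set.Icc (0:ℝ) 1,
      s • x ζ = Matrix.toEuclideanLin P₁ (u' ζ)
        + Matrix.toEuclideanLin P₀ (Matrix.toEuclideanLin (𝓗 ζ) (x ζ)))

/-!
For a classical solution `x`, the function `u = 𝓗 x` solves a linear system `u' = A(ζ) u` with
coefficients continuous on `[0,1]`, so by uniqueness for Lipschitz ODEs `x` is determined by
`x 0`, i.e. `x ζ = Ψˢ(ζ) x(0)`. The nonzero solutions are therefore exactly the `Ψˢ v` with
`v ≠ 0`, and for these the boundary condition reads `(W₁ 𝓗(1) Ψˢ(1) + W₀ 𝓗(0)) v = 0`.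
-/

open Topology

theorem ODE_solution_unique_of_linear {𝕜 E : Type*} [NontriviallyNormedField 𝕜]
    [NormedAddCommGroup E] [NormedSpace ℝ E] [NormedSpace 𝕜 E]
    {A : ℝ → E →L[𝕜] E} {f g : ℝ → E} {a b : ℝ} (hA : ContinuousOn A (Icc a b))
    (hf : ∀ t ∈ Icc a b, HasDerivWithinAt f (A t (f t)) (Icc a b) t)
    (hg : ∀ t ∈ Icc a b, HasDerivWithinAt g (A t (g t)) (Icc a b) t)
    (ha : f a = g a) : EqOn f g (Icc a b) := by
  obtain ⟨C, hC⟩ := isCompact_Icc.exists_bound_of_continuousOn hA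
  have hlip : ∀ t ∈ Ico a b, LipschitzOnWith C.toNNReal (A t) univ := fun t ht =>
    ((A t).lipschitz.weaken <| NNReal.coe_le_coe.1 <|
      (hC t (Ico_subset_Icc_self ht)).trans C.le_coe_toNNReal).lipschitzOnWith
  have hIci : ∀ t ∈ Ico a b, Icc a b ∈ 𝓝[Ici t] t := fun t ht => Icc_mem_nhdsGE_of_mem ht
  exact ODE_solution_unique_of_mem_Icc_right hlip
    (fun t ht => (hf t ht).continuousWithinAt)
    (fun t ht => (hf t (Ico_subset_Icc_self ht)).mono_of_mem_nhdsWithin (hIci t ht))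
    (fun _ _ => trivial)
    (fun t ht => (hg t ht).continuousWithinAt)
    (fun t ht => (hg t (Ico_subset_Icc_self ht)).mono_of_mem_nhdsWithin (hIci t ht))
    (fun _ _ => trivial) ha

theorem ContinuousOn.matrix_inv {X R n : Type*} [TopologicalSpace X] [Fintype n] [DecidableEq n]
    [Field R] [TopologicalSpace R] [IsTopologicalRing R] [ContinuousInv₀ R]
    {A : X → Matrix n n R} {s : Set X} (hA : ContinuousOn A s)
    (hdet : ∀ x ∈ s, (A x).det ≠ 0) : ContinuousOn (fun x => (A x)⁻¹) s := by
  intro x hx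
  have hinv : ContinuousAt Ring.inverse (A x).det := by
    simpa only [Ring.inverse_eq_inv'] using continuousAt_inv₀ (hdet x hx)
  exact (continuousAt_matrix_inv _ hinv).comp_continuousWithinAt (hA x hx)

theorem Matrix.toLpLin_nonsing_inv_apply_apply {n R : Type*} [Fintype n] [DecidableEq n]
    [CommRing R] (p : ENNReal) {A : Matrix n n R} (hA : IsUnit A) (v : WithLp p (n → R)) :
    toLpLin p p A⁻¹ (toLpLin p p A v) = v := by
  rw [← LinearMap.comp_apply, ← toLpLin_mul_same,
    nonsing_inv_mul _ ((isUnit_iff_isUnit_det A).1 hA), toLpLin_one, LinearMap.id_apply]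

theorem Matrix.exists_toLpLin_eq_zero_iff {n K : Type*} [Fintype n] [DecidableEq n] [Field K]
    (p : ENNReal) {A : Matrix n n K} : (∃ v ≠ 0, toLpLin p p A v = 0) ↔ A.det = 0 := by
  rw [← exists_mulVec_eq_zero_iff]
  constructor
  · rintro ⟨v, hv, hAv⟩
    exact ⟨v.ofLp, by simpa using hv, by simpa [toLpLin_apply] using hAv⟩
  · rintro ⟨v, hv, hAv⟩
    exact ⟨WithLp.toLp p v, by simpa using hv, by simp [toLpLin_apply, hAv]⟩

section PortHamiltonian

variable {d : ℕ} {P₁ P₀ : Matrix (Fin d) (Fin d) ℂ} {𝓗 : ℝ → Matrix (Fin d) (Fin d) ℂ} {s : ℂ}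

noncomputable def eigenSystemMatrix (P₁ P₀ : Matrix (Fin d) (Fin d) ℂ)
    (𝓗 : ℝ → Matrix (Fin d) (Fin d) ℂ) (s : ℂ) (t : ℝ) : Matrix (Fin d) (Fin d) ℂ :=
  P₁⁻¹ * (s • (𝓗 t)⁻¹ - P₀)

theorem continuousOn_eigenSystemMatrix (h𝓗cont : ContinuousOn 𝓗 (Icc 0 1))
    (h𝓗inv : ∀ t ∈ Icc (0:ℝ) 1, IsUnit (𝓗 t)) :
    ContinuousOn (eigenSystemMatrix P₁ P₀ 𝓗 s) (Icc 0 1) :=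
  continuousOn_const.mul <| (h𝓗cont.matrix_inv fun t ht =>
    ((isUnit_iff_isUnit_det _).1 (h𝓗inv t ht)).ne_zero).const_smul s |>.sub continuousOn_const

theorem IsClassicalSolution.hasDerivWithinAt {x : ℝ → EuclideanSpace ℂ (Fin d)}
    (hx : IsClassicalSolution P₁ P₀ 𝓗 s x) (hP₁ : IsUnit P₁)
    (h𝓗inv : ∀ t ∈ Icc (0:ℝ) 1, IsUnit (𝓗 t)) :
    ∀ t ∈ Icc (0:ℝ) 1, HasDerivWithinAt (fun t => toEuclideanLin (𝓗 t) (x t))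
      (toEuclideanLin (eigenSystemMatrix P₁ P₀ 𝓗 s t) (toEuclideanLin (𝓗 t) (x t)))
      (Icc 0 1) t := by
  obtain ⟨u', -, hderiv, hode⟩ := hx
  intro t ht
  convert hderiv t ht using 1
  calc toEuclideanLin (eigenSystemMatrix P₁ P₀ 𝓗 s t) (toEuclideanLin (𝓗 t) (x t))
      = toEuclideanLin P₁⁻¹ (s • x t - toEuclideanLin P₀ (toEuclideanLin (𝓗 t) (x t))) := by
        simp only [eigenSystemMatrix, toLpLin_mul_same, LinearMap.comp_apply, map_sub, map_smul,
          LinearMap.sub_apply, LinearMap.smul_apply, toLpLin_nonsing_inv_apply_apply _ (h𝓗inv t ht)]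
    _ = u' t := by
        rw [hode t ht, add_sub_cancel_right, toLpLin_nonsing_inv_apply_apply _ hP₁]

theorem IsClassicalSolution.eqOn_of_apply_zero_eq {x y : ℝ → EuclideanSpace ℂ (Fin d)}
    (hx : IsClassicalSolution P₁ P₀ 𝓗 s x) (hy : IsClassicalSolution P₁ P₀ 𝓗 s y)
    (hP₁ : IsUnit P₁) (h𝓗cont : ContinuousOn 𝓗 (Icc 0 1))
    (h𝓗inv : ∀ t ∈ Icc (0:ℝ) 1, IsUnit (𝓗 t)) (h0 : x 0 = y 0) : EqOn x y (Icc 0 1) := by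
  let L := toEuclideanCLM (𝕜 := ℂ) (n := Fin d)
  have hA : ContinuousOn (fun t => L (eigenSystemMatrix P₁ P₀ 𝓗 s t)) (Icc 0 1) :=
    L.toAlgEquiv.toLinearMap.continuous_of_finiteDimensional.comp_continuousOn
      (continuousOn_eigenSystemMatrix h𝓗cont h𝓗inv)
  have hu : EqOn (fun t => toEuclideanLin (𝓗 t) (x t)) (fun t => toEuclideanLin (𝓗 t) (y t))
      (Icc 0 1) :=
    ODE_solution_unique_of_linear hA (hx.hasDerivWithinAt hP₁ h𝓗inv)
      (hy.hasDerivWithinAt hP₁ h𝓗inv) (by simp only [h0])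
  intro t ht
  simpa only [toLpLin_nonsing_inv_apply_apply _ (h𝓗inv t ht)] using
    congrArg (toEuclideanLin (𝓗 t)⁻¹) (hu ht)

end PortHamiltonian

theorem eigenvalue_iff_det_eq_zero_general
    (d : ℕ)
    (P₁ P₀ : Matrix (Fin d) (Fin d) ℂ)
    (hP₁inv : IsUnit P₁)
    (𝓗 : ℝ → Matrix (Fin d) (Fin d) ℂ)
    (h𝓗cont : ContinuousOn 𝓗 (Set.Icc 0 1))
    (h𝓗pos : ∀ ζ ∈ Set.Icc (0:ℝ) 1, (𝓗 ζ).PosDef)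
    (W₁ W₀ : Matrix (Fin d) (Fin d) ℂ)
    -- `Ψ` is the fundamental solution of the eigenvalue ODE
    (Ψ : ℂ → ℝ → Matrix (Fin d) (Fin d) ℂ)
    (hΨ0 : ∀ s : ℂ, Ψ s 0 = 1)
    (hΨsol : ∀ (s : ℂ) (v : EuclideanSpace ℂ (Fin d)),
      IsClassicalSolution P₁ P₀ 𝓗 s (fun ζ => Matrix.toEuclideanLin (Ψ s ζ) v))
    (s : ℂ) :
    (∃ x : ℝ → EuclideanSpace ℂ (Fin d),
        IsClassicalSolution P₁ P₀ 𝓗 s x ∧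
        (∃ ζ ∈ Set.Icc (0:ℝ) 1, x ζ ≠ 0) ∧
        Matrix.toEuclideanLin W₁ (Matrix.toEuclideanLin (𝓗 1) (x 1))
          + Matrix.toEuclideanLin W₀ (Matrix.toEuclideanLin (𝓗 0) (x 0)) = 0) ↔
      (W₁ * 𝓗 1 * Ψ s 1 + W₀ * 𝓗 0).det = 0 := by
  have hΨ0v (v : EuclideanSpace ℂ (Fin d)) : toEuclideanLin (Ψ s 0) v = v := by
    simp only [hΨ0, toLpLin_one, LinearMap.id_apply]
  have hfund (x : ℝ → EuclideanSpace ℂ (Fin d)) (hx : IsClassicalSolution P₁ P₀ 𝓗 s x) :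
      EqOn x (fun ζ => toEuclideanLin (Ψ s ζ) (x 0)) (Icc 0 1) :=
    hx.eqOn_of_apply_zero_eq (hΨsol s (x 0)) hP₁inv h𝓗cont (fun t ht => (h𝓗pos t ht).isUnit)
      (hΨ0v (x 0)).symm
  have hboundary (v : EuclideanSpace ℂ (Fin d)) :
      toEuclideanLin W₁ (toEuclideanLin (𝓗 1) (toEuclideanLin (Ψ s 1) v))
        + toEuclideanLin W₀ (toEuclideanLin (𝓗 0) v)
        = toEuclideanLin (W₁ * 𝓗 1 * Ψ s 1 + W₀ * 𝓗 0) v := by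
    simp only [map_add, LinearMap.add_apply, toLpLin_mul_same, LinearMap.comp_apply]
  rw [← exists_toLpLin_eq_zero_iff 2]
  constructor
  · rintro ⟨x, hx, ⟨ζ, hζ, hxζ⟩, hbc⟩
    refine ⟨x 0, fun h0 => hxζ ?_, ?_⟩
    · rw [hfund x hx hζ, h0]
      exact map_zero _
    · have hx1 : x 1 = toEuclideanLin (Ψ s 1) (x 0) := hfund x hx (right_mem_Icc.2 zero_le_one)
      rw [← hboundary, ← hx1, hbc]
  · rintro ⟨v, hv, hMv⟩
    refine ⟨_, hΨsol s v, ⟨0, left_mem_Icc.2 zero_le_one, by rwa [hΨ0v]⟩, ?_⟩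
    rw [hΨ0v, hboundary, hMv]

/-- **Lemma 5.4.** A complex number `s` admits a nonzero classical solution of
the eigenvalue ODE satisfying the boundary condition `W₁(𝓗x)(1) + W₀(𝓗x)(0) = 0`
(i.e. `s` is an eigenvalue of the port-Hamiltonian operator) if and only if
`det (W₁·𝓗(1)·Ψˢ(1) + W₀·𝓗(0)) = 0`, where `Ψˢ` is the fundamental solution. -/
theorem eigenvalue_iff_det_eq_zero
    (d : ℕ) (hd : 1 ≤ d)
    (P₁ P₀ : Matrix (Fin d) (Fin d) ℂ)
    (hP₁herm : P₁.IsHermitian) (hP₁inv : IsUnit P₁)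
    (hP₀skew : P₀ᴴ = -P₀)
    (𝓗 : ℝ → Matrix (Fin d) (Fin d) ℂ)
    (h𝓗cont : ContinuousOn 𝓗 (Set.Icc 0 1))
    (h𝓗pos : ∀ ζ ∈ Set.Icc (0:ℝ) 1, (𝓗 ζ).PosDef)
    (S R Δ : ℝ → Matrix (Fin d) (Fin d) ℂ)
    (hS : ∀ i j, ContDiffOn ℝ 1 (fun ζ => S ζ i j) (Set.Icc 0 1))
    (hR : ∀ i j, ContDiffOn ℝ 1 (fun ζ => R ζ i j) (Set.Icc 0 1))
    (hΔ : ∀ i j, ContDiffOn ℝ 1 (fun ζ => Δ ζ i j) (Set.Icc 0 1))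
    (hRS : ∀ ζ ∈ Set.Icc (0:ℝ) 1, R ζ * S ζ = 1 ∧ S ζ * R ζ = 1)
    (hΔdiag : ∀ ζ ∈ Set.Icc (0:ℝ) 1, (Δ ζ).IsDiag)
    (hΔreal : ∀ ζ ∈ Set.Icc (0:ℝ) 1, ∀ i, (Δ ζ i i).im = 0)
    (hΔinv : ∀ ζ ∈ Set.Icc (0:ℝ) 1, IsUnit (Δ ζ))
    (hfact : ∀ ζ ∈ Set.Icc (0:ℝ) 1, P₁ * 𝓗 ζ = R ζ * Δ ζ * S ζ)
    -- boundary matrices of full rank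
    (W₁ W₀ : Matrix (Fin d) (Fin d) ℂ)
    (hrank : (Matrix.fromCols W₁ W₀).rank = d)
    -- `Ψ` is the fundamental solution of the eigenvalue ODE
    (Ψ : ℂ → ℝ → Matrix (Fin d) (Fin d) ℂ)
    (hΨ0 : ∀ s : ℂ, Ψ s 0 = 1)
    (hΨsol : ∀ (s : ℂ) (v : EuclideanSpace ℂ (Fin d)),
      IsClassicalSolution P₁ P₀ 𝓗 s (fun ζ => Matrix.toEuclideanLin (Ψ s ζ) v))
    (s : ℂ) :
    (∃ x : ℝ → EuclideanSpace ℂ (Fin d),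
        IsClassicalSolution P₁ P₀ 𝓗 s x ∧
        (∃ ζ ∈ Set.Icc (0:ℝ) 1, x ζ ≠ 0) ∧
        Matrix.toEuclideanLin W₁ (Matrix.toEuclideanLin (𝓗 1) (x 1))
          + Matrix.toEuclideanLin W₀ (Matrix.toEuclideanLin (𝓗 0) (x 0)) = 0) ↔
      (W₁ * 𝓗 1 * Ψ s 1 + W₀ * 𝓗 0).det = 0 :=
  eigenvalue_iff_det_eq_zero_general d P₁ P₀ hP₁inv 𝓗 h𝓗cont h𝓗pos W₁ W₀ Ψ hΨ0 hΨsol s
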